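/- arXiv:0809.2947 — 3 statements merged into one kernel-verified Lean document; each statement's English description precedes it below -/
import Mathlib

section
/- An integral domain D is a ∗-CICD if and only if D is a ∗-multiplication domain. -/
/-!
Both directions rest on `(A∗ B)∗ = (AB)∗`, which follows from the compatibility of `∗` with
principal ideals. If every `B` is `∗`-invertible, then `C = A B⁻¹` gives
`(BC)∗ = ((BB⁻¹)∗ A)∗ = A∗`. Conversely, for `0 ≠ a ∈ A` the inclusion `(a)∗ = (a) ⊆ A∗` yields
`C` with `(AC)∗ = (a)`, so `(A · a⁻¹C)∗ = D`; then `a⁻¹C ⊆ A⁻¹` and `D ⊆ (AA⁻¹)∗ ⊆ D`.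
-/

open FractionalIdeal

/-- A star operation on an integral domain `D` with fraction field `K`, acting on
fractional ideals: it fixes `D`, is extensive, monotone, idempotent (all on nonzero
ideals), and commutes with multiplication by nonzero principal fractional ideals. -/
structure StarOp (D : Type*) [CommRing D] [IsDomain D] (K : Type*) [Field K]
    [Algebra D K] [IsFractionRing D K] where
  star : FractionalIdeal (nonZeroDivisors D) K → FractionalIdeal (nonZeroDivisors D) K
  star_one : star 1 = 1
  le_star : ∀ {A}, A ≠ 0 → A ≤ star A
  star_mono : ∀ {A B}, A ≠ 0 → A ≤ B → star A ≤ star B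
  star_idem : ∀ {A}, A ≠ 0 → star (star A) = star A
  star_smul : ∀ {A : FractionalIdeal (nonZeroDivisors D) K} (x : K), x ≠ 0 → A ≠ 0 →
    star (spanSingleton (nonZeroDivisors D) x * A) = spanSingleton (nonZeroDivisors D) x * star A

variable {D K : Type*} [CommRing D] [IsDomain D] [Field K] [Algebra D K] [IsFractionRing D K]

namespace FractionalIdeal

section NoZeroDivisors

variable {R P : Type*} [CommRing R] {S : Submonoid R} [CommRing P] [Algebra R P]

instance [NoZeroDivisors P] : NoZeroDivisors (FractionalIdeal S P) :=
  coeToSubmodule_injective.noZeroDivisors _ coe_zero coe_mul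

theorem exists_mem_ne_zero {I : FractionalIdeal S P} (hI : I ≠ 0) : ∃ x ∈ I, x ≠ 0 := by
  obtain ⟨x, hxI, hx⟩ := SetLike.exists_of_lt (bot_lt_iff_ne_bot.mpr hI)
  exact ⟨x, hxI, by simpa using hx⟩

end NoZeroDivisors

theorem mul_inv_ne_zero {I : FractionalIdeal (nonZeroDivisors D) K} (hI : I ≠ 0) :
    I * I⁻¹ ≠ 0 :=
  (bot_lt_mul_inv hI).ne'

end FractionalIdeal

namespace StarOp

variable (s : StarOp D K) {A B C : FractionalIdeal (nonZeroDivisors D) K}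

theorem star_ne_zero (hA : A ≠ 0) : s.star A ≠ 0 :=
  ne_bot_of_le_ne_bot hA (s.le_star hA)

theorem star_spanSingleton {x : K} (hx : x ≠ 0) :
    s.star (spanSingleton (nonZeroDivisors D) x) = spanSingleton (nonZeroDivisors D) x := by
  simpa only [mul_one, s.star_one] using s.star_smul (A := 1) x hx one_ne_zero

theorem mul_star_le_star_mul (hB : B ≠ 0) : A * s.star B ≤ s.star (A * B) := by
  refine mul_le.mpr fun a ha b hb => ?_
  rcases eq_or_ne a 0 with rfl | ha0
  · simpa only [zero_mul] using FractionalIdeal.zero_mem _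
  have hspan : spanSingleton (nonZeroDivisors D) a ≠ 0 := spanSingleton_ne_zero_iff.mpr ha0
  have hle : s.star (spanSingleton _ a * B) ≤ s.star (A * B) :=
    s.star_mono (mul_ne_zero hspan hB) (mul_le_mul_left (spanSingleton_le_iff_mem.mpr ha) B)
  rw [s.star_smul a ha0 hB] at hle
  exact hle (mul_mem_mul (mem_spanSingleton_self _ a) hb)

theorem star_star_mul (hA : A ≠ 0) (hB : B ≠ 0) : s.star (s.star A * B) = s.star (A * B) := by
  refine le_antisymm ?_ (s.star_mono (mul_ne_zero hA hB) (mul_le_mul_left (s.le_star hA) B))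
  calc s.star (s.star A * B)
      ≤ s.star (s.star (A * B)) := by
        rw [mul_comm, mul_comm A]
        exact s.star_mono (mul_ne_zero hB (s.star_ne_zero hA)) (s.mul_star_le_star_mul hA)
    _ = s.star (A * B) := s.star_idem (mul_ne_zero hA hB)

theorem star_mul_inv_le_one (hA : A ≠ 0) : s.star (A * A⁻¹) ≤ 1 :=
  s.star_one ▸ s.star_mono (mul_inv_ne_zero hA) mul_one_div_le_one

theorem star_eq_star_mul_mul_inv (hB : s.star (B * B⁻¹) = 1) (hB0 : B ≠ 0) (hA : A ≠ 0) :
    s.star A = s.star (B * (A * B⁻¹)) := by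
  rw [mul_left_comm, mul_comm, ← s.star_star_mul (mul_inv_ne_zero hB0) hA, hB, one_mul]

theorem star_mul_inv_eq_one_of_star_mul_eq_one (hA : A ≠ 0) (hC : C ≠ 0)
    (h : s.star (A * C) = 1) : s.star (A * A⁻¹) = 1 := by
  have hAC : A * C ≤ 1 := h ▸ s.le_star (mul_ne_zero hA hC)
  have hCA : C ≤ A⁻¹ := by
    rw [inv_eq, le_div_iff_mul_le hA, mul_comm]
    exact hAC
  refine le_antisymm (s.star_mul_inv_le_one hA) ?_
  calc 1 = s.star (A * C) := h.symm
    _ ≤ s.star (A * A⁻¹) := s.star_mono (mul_ne_zero hA hC) (mul_le_mul_right hCA A)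

theorem star_mul_inv_eq_one_of_star_mul_eq_spanSingleton (hA : A ≠ 0) (hC : C ≠ 0) {a : K}
    (ha : a ≠ 0) (h : s.star (A * C) = spanSingleton (nonZeroDivisors D) a) :
    s.star (A * A⁻¹) = 1 := by
  have hC' : spanSingleton (nonZeroDivisors D) a⁻¹ * C ≠ 0 :=
    mul_ne_zero (spanSingleton_ne_zero_iff.mpr (inv_ne_zero ha)) hC
  refine s.star_mul_inv_eq_one_of_star_mul_eq_one hA hC' ?_
  rw [mul_left_comm, s.star_smul _ (inv_ne_zero ha) (mul_ne_zero hA hC), h,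
    spanSingleton_mul_spanSingleton, inv_mul_cancel₀ ha, spanSingleton_one]

end StarOp

/-- `D` is a `∗`-CICD iff `D` is a `∗`-multiplication domain. -/
theorem starCICD_iff_starMultiplication (s : StarOp D K) :
    (∀ A : FractionalIdeal (nonZeroDivisors D) K, A ≠ 0 → s.star (A * A⁻¹) = 1) ↔
    (∀ A B : FractionalIdeal (nonZeroDivisors D) K, A ≠ 0 → B ≠ 0 → s.star A ≤ s.star B →
      ∃ C : FractionalIdeal (nonZeroDivisors D) K, C ≠ 0 ∧ s.star A = s.star (B * C)) := by
  constructor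
  · intro hCICD A B hA hB _
    exact ⟨A * B⁻¹, mul_ne_zero hA (right_ne_zero_of_mul (mul_inv_ne_zero hB)),
      s.star_eq_star_mul_mul_inv (hCICD B hB) hB hA⟩
  · intro hMul A hA
    obtain ⟨a, haA, ha⟩ := exists_mem_ne_zero hA
    have hspan : spanSingleton (nonZeroDivisors D) a ≠ 0 := spanSingleton_ne_zero_iff.mpr ha
    have hle : s.star (spanSingleton _ a) ≤ s.star A := by
      rw [s.star_spanSingleton ha]
      exact (spanSingleton_le_iff_mem.mpr haA).trans (s.le_star hA)
    obtain ⟨C, hC, hAC⟩ := hMul _ A hspan hA hle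
    exact s.star_mul_inv_eq_one_of_star_mul_eq_spanSingleton hA hC ha
      ((s.star_spanSingleton ha).symm.trans hAC).symm
end

section
/- An integral domain D is a (∗,v)-CICD if and only if (AB)⁻¹ = (A⁻¹B⁻¹)^∗ for all nonzero fractional ideals A, B of D. -/
/-!
The whole argument runs on one consequence of the star axioms: `C * Y^∗ ≤ (C * Y)^∗`, obtained
by applying `(x Y)^∗ = x Y^∗` to each `x ∈ C`. With it, `Y^∗ ≤ C⁻¹` whenever `C Y ≤ D`, which gives
`(A⁻¹B⁻¹)^∗ ≤ (AB)⁻¹`. Conversely `(AB)⁻¹ A^v B^v ≤ D`, so in a `(∗,v)`-CICD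
`(AB)⁻¹ = (AB)⁻¹ (A^v A⁻¹)^∗ (B^v B⁻¹)^∗ ≤ ((AB)⁻¹ A^v B^v A⁻¹ B⁻¹)^∗ ≤ (A⁻¹B⁻¹)^∗`.
Finally, taking `B = A⁻¹` in the product formula gives `(A^v A⁻¹)^∗ = (A A⁻¹)⁻¹`, and
`A A⁻¹ ≤ D` forces `D ≤ (A A⁻¹)⁻¹ = (A^v A⁻¹)^∗ ≤ D^∗ = D`.
-/

open FractionalIdeal

variable {D K : Type*} [CommRing D] [IsDomain D] [Field K] [Algebra D K] [IsFractionRing D K]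

namespace FractionalIdeal

instance {R P : Type*} [CommRing R] [CommRing P] [NoZeroDivisors P] [Algebra R P]
    {S : Submonoid R} : NoZeroDivisors (FractionalIdeal S P) :=
  coeToSubmodule_injective.noZeroDivisors _ coe_zero coe_mul

variable {I J : FractionalIdeal (nonZeroDivisors D) K}

theorem mul_inv_le_one : I * I⁻¹ ≤ 1 :=
  mul_one_div_le_one

theorem inv_ne_zero_of_ne_zero (hI : I ≠ 0) : I⁻¹ ≠ 0 :=
  right_ne_zero_of_mul (bot_lt_mul_inv hI).ne'

theorem le_inv_iff_mul_le_one (hJ : J ≠ 0) : I ≤ J⁻¹ ↔ I * J ≤ 1 :=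
  le_div_iff_mul_le hJ

theorem mul_inv_inv_le_one_of_mul_le_one (hJ : J ≠ 0) (h : I * J ≤ 1) : I * J⁻¹⁻¹ ≤ 1 :=
  calc I * J⁻¹⁻¹ ≤ J⁻¹ * J⁻¹⁻¹ := mul_le_mul_left ((le_inv_iff_mul_le_one hJ).2 h) _
    _ ≤ 1 := mul_inv_le_one

theorem inv_mul_mul_inv_inv_mul_inv_inv_le_one {A B : FractionalIdeal (nonZeroDivisors D) K}
    (hA : A ≠ 0) (hB : B ≠ 0) : (A * B)⁻¹ * A⁻¹⁻¹ * B⁻¹⁻¹ ≤ 1 := by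
  have hAB : (A * B)⁻¹ * B * A ≤ 1 := by
    rw [mul_assoc, mul_comm B A, mul_comm]
    exact mul_inv_le_one
  have hAvB : (A * B)⁻¹ * B * A⁻¹⁻¹ ≤ 1 := mul_inv_inv_le_one_of_mul_le_one hA hAB
  rw [mul_right_comm] at hAvB
  exact mul_inv_inv_le_one_of_mul_le_one hB hAvB

end FractionalIdeal

namespace StarOp

def IsCICD (s : StarOp D K) : Prop :=
  ∀ A : FractionalIdeal (nonZeroDivisors D) K, A ≠ 0 → s.star (A⁻¹⁻¹ * A⁻¹) = 1

variable (s : StarOp D K) {C Y Z : FractionalIdeal (nonZeroDivisors D) K}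

theorem star_ne_zero_s2 (hY : Y ≠ 0) : s.star Y ≠ 0 :=
  ne_bot_of_le_ne_bot hY (s.le_star hY)

theorem star_le_one (hY : Y ≠ 0) (h : Y ≤ 1) : s.star Y ≤ 1 :=
  s.star_one ▸ s.star_mono hY h

theorem mul_star_le (C : FractionalIdeal (nonZeroDivisors D) K) (hY : Y ≠ 0) :
    C * s.star Y ≤ s.star (C * Y) := by
  rw [mul_le]
  intro c hc y hy
  rcases eq_or_ne c 0 with rfl | hc0
  · simpa using zero_mem (s.star (C * Y))
  have hcY : c * y ∈ s.star (spanSingleton _ c * Y) := by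
    rw [s.star_smul c hc0 hY]
    exact mul_mem_mul (mem_spanSingleton_self _ c) hy
  exact s.star_mono (mul_ne_zero (spanSingleton_ne_zero_iff.2 hc0) hY)
    (mul_le_mul_left (spanSingleton_le_iff_mem.2 hc) Y) hcY

theorem star_mul_star_le (hY : Y ≠ 0) (hZ : Z ≠ 0) :
    s.star Y * s.star Z ≤ s.star (Y * Z) :=
  calc s.star Y * s.star Z ≤ s.star (s.star Y * Z) := s.mul_star_le _ hZ
    _ ≤ s.star (s.star (Y * Z)) := by
      refine s.star_mono (mul_ne_zero (s.star_ne_zero_s2 hY) hZ) ?_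
      simpa only [mul_comm Z] using s.mul_star_le Z hY
    _ = s.star (Y * Z) := s.star_idem (mul_ne_zero hY hZ)

theorem star_le_inv_of_mul_le_one (hC : C ≠ 0) (hY : Y ≠ 0) (h : C * Y ≤ 1) :
    s.star Y ≤ C⁻¹ := by
  rw [le_inv_iff_mul_le_one hC, mul_comm]
  exact (s.mul_star_le C hY).trans (s.star_le_one (mul_ne_zero hC hY) h)

variable {s} in
theorem IsCICD.inv_mul_le_star_inv_mul_inv (hCICD : s.IsCICD)
    {A B : FractionalIdeal (nonZeroDivisors D) K} (hA : A ≠ 0) (hB : B ≠ 0) :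
    (A * B)⁻¹ ≤ s.star (A⁻¹ * B⁻¹) := by
  have hAi := inv_ne_zero_of_ne_zero hA
  have hBi := inv_ne_zero_of_ne_zero hB
  have hWA : A⁻¹⁻¹ * A⁻¹ ≠ 0 := mul_ne_zero (inv_ne_zero_of_ne_zero hAi) hAi
  have hWB : B⁻¹⁻¹ * B⁻¹ ≠ 0 := mul_ne_zero (inv_ne_zero_of_ne_zero hBi) hBi
  have hprod : (A * B)⁻¹ * (A⁻¹⁻¹ * A⁻¹ * (B⁻¹⁻¹ * B⁻¹)) ≤ A⁻¹ * B⁻¹ := by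
    rw [show (A * B)⁻¹ * (A⁻¹⁻¹ * A⁻¹ * (B⁻¹⁻¹ * B⁻¹))
        = (A * B)⁻¹ * A⁻¹⁻¹ * B⁻¹⁻¹ * (A⁻¹ * B⁻¹) by ring]
    simpa only [one_mul] using
      mul_le_mul_left (inv_mul_mul_inv_inv_mul_inv_inv_le_one hA hB) (A⁻¹ * B⁻¹)
  calc (A * B)⁻¹ = (A * B)⁻¹ * (s.star (A⁻¹⁻¹ * A⁻¹) * s.star (B⁻¹⁻¹ * B⁻¹)) := by
        rw [hCICD A hA, hCICD B hB, mul_one, mul_one]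
    _ ≤ (A * B)⁻¹ * s.star (A⁻¹⁻¹ * A⁻¹ * (B⁻¹⁻¹ * B⁻¹)) :=
        mul_le_mul_right (s.star_mul_star_le hWA hWB) _
    _ ≤ s.star ((A * B)⁻¹ * (A⁻¹⁻¹ * A⁻¹ * (B⁻¹⁻¹ * B⁻¹))) := s.mul_star_le _ (mul_ne_zero hWA hWB)
    _ ≤ s.star (A⁻¹ * B⁻¹) :=
        s.star_mono (mul_ne_zero (inv_ne_zero_of_ne_zero (mul_ne_zero hA hB)) (mul_ne_zero hWA hWB))
          hprod

end StarOp

/-- `D` is a `(∗,v)`-CICD iff `(AB)⁻¹ = (A⁻¹B⁻¹)^∗` for all nonzero fractional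
ideals `A`, `B`. -/
theorem starVCICD_iff_inv_mul (s : StarOp D K) :
    (∀ A : FractionalIdeal (nonZeroDivisors D) K, A ≠ 0 → s.star ((A⁻¹)⁻¹ * A⁻¹) = 1) ↔
    (∀ A B : FractionalIdeal (nonZeroDivisors D) K, A ≠ 0 → B ≠ 0 → (A * B)⁻¹ = s.star (A⁻¹ * B⁻¹)) := by
  constructor
  · intro (hCICD : s.IsCICD) A B hA hB
    refine le_antisymm (hCICD.inv_mul_le_star_inv_mul_inv hA hB) ?_
    refine s.star_le_inv_of_mul_le_one (mul_ne_zero hA hB)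
      (mul_ne_zero (inv_ne_zero_of_ne_zero hA) (inv_ne_zero_of_ne_zero hB)) ?_
    rw [mul_mul_mul_comm]
    exact mul_le_one' mul_inv_le_one mul_inv_le_one
  · intro hinv A hA
    have hAi := inv_ne_zero_of_ne_zero hA
    rw [mul_comm, ← hinv A A⁻¹ hA hAi]
    refine le_antisymm ?_ ((le_inv_iff_mul_le_one (mul_ne_zero hA hAi)).2 ?_)
    · rw [hinv A A⁻¹ hA hAi]
      exact s.star_le_one (mul_ne_zero hAi (inv_ne_zero_of_ne_zero hAi)) mul_inv_le_one
    · rw [one_mul]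
      exact mul_inv_le_one
end

section
/- An integral domain D is a (∗,v)-CICD if and only if (A^v : B) = (A^v B⁻¹)^∗ for all nonzero fractional ideals A, B of D. -/
/-!
The inequality `(A^v B⁻¹)^∗ ⊆ (A^v : B)` holds for every star operation, because `∗`-closures of
nonzero ideals lie in their `v`-closures and `v`-ideals are therefore `∗`-ideals. Conversely, if
`x B ⊆ A^v` then also `x B^v ⊆ A^v`, so `x = x (B^v B⁻¹)^∗ ⊆ (A^v B⁻¹)^∗` when `(B^v B⁻¹)^∗ = D`.
Taking `B = A^v` in the colon formula gives back `(A^v A⁻¹)^∗ = (A^v : A^v) ⊇ D`.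
-/

open FractionalIdeal

variable {D K : Type*} [CommRing D] [IsDomain D] [Field K] [Algebra D K] [IsFractionRing D K]

namespace FractionalIdeal

theorem mul_ne_zero_of_ne_zero {R P : Type*} [CommRing R] [CommRing P] [NoZeroDivisors P]
    [Algebra R P] {S : Submonoid R} {I J : FractionalIdeal S P} (hI : I ≠ 0) (hJ : J ≠ 0) :
    I * J ≠ 0 := by
  rw [← coeToSubmodule_ne_bot, coe_mul]
  exact mul_ne_zero (coeToSubmodule_ne_bot.mpr hI) (coeToSubmodule_ne_bot.mpr hJ)

variable {A B X : FractionalIdeal (nonZeroDivisors D) K}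

theorem inv_ne_zero_of_ne_zero_s7 (hA : A ≠ 0) : A⁻¹ ≠ 0 := fun h =>
  (bot_lt_mul_inv hA).ne' (by rw [h, mul_zero]; rfl)

theorem le_inv_iff_mul_le_one_s7 (hB : B ≠ 0) : X ≤ B⁻¹ ↔ X * B ≤ 1 :=
  le_div_iff_mul_le hB

theorem le_inv_inv (hA : A ≠ 0) : A ≤ A⁻¹⁻¹ :=
  (le_inv_iff_mul_le_one_s7 (inv_ne_zero_of_ne_zero_s7 hA)).mpr mul_one_div_le_one

theorem inv_inv_inv (hA : A ≠ 0) : A⁻¹⁻¹⁻¹ = A⁻¹ :=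
  le_antisymm (inv_anti_mono hA (inv_ne_zero_of_ne_zero_s7 (inv_ne_zero_of_ne_zero_s7 hA)) (le_inv_inv hA))
    (le_inv_inv (inv_ne_zero_of_ne_zero_s7 hA))

theorem mul_inv_inv_le_one (hB : B ≠ 0) (h : X * B ≤ 1) : X * B⁻¹⁻¹ ≤ 1 :=
  calc X * B⁻¹⁻¹ ≤ B⁻¹ * B⁻¹⁻¹ := mul_le_mul_left ((le_inv_iff_mul_le_one_s7 hB).mpr h) _
    _ ≤ 1 := mul_one_div_le_one

theorem mul_inv_inv_le_inv (hA : A ≠ 0) (hB : B ≠ 0) (h : X * B ≤ A⁻¹) : X * B⁻¹⁻¹ ≤ A⁻¹ := by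
  rw [le_inv_iff_mul_le_one_s7 hA, mul_right_comm] at h ⊢
  exact mul_inv_inv_le_one hB h

end FractionalIdeal

namespace StarOp

variable (s : StarOp D K) {A B I J X : FractionalIdeal (nonZeroDivisors D) K}

theorem star_le_one_s7 (hI : I ≠ 0) (h : I ≤ 1) : s.star I ≤ 1 :=
  s.star_one ▸ s.star_mono hI h

theorem mul_star_le_star_mul_s7 (hJ : J ≠ 0) : X * s.star J ≤ s.star (X * J) := by
  refine mul_le.mpr fun x hx j hj => ?_
  by_cases hx0 : x = 0
  · rw [hx0, zero_mul]
    exact zero_mem _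
  have hxJ : spanSingleton _ x * s.star J ≤ s.star (X * J) := by
    rw [← s.star_smul x hx0 hJ]
    exact s.star_mono (mul_ne_zero_of_ne_zero (spanSingleton_ne_zero_iff.mpr hx0) hJ)
      (mul_le_mul_left (spanSingleton_le_iff_mem.mpr hx) J)
  exact hxJ (mul_mem_mul (mem_spanSingleton_self _ x) hj)

theorem star_le_inv_inv (hI : I ≠ 0) : s.star I ≤ I⁻¹⁻¹ := by
  have hIi := inv_ne_zero_of_ne_zero_s7 hI
  rw [le_inv_iff_mul_le_one_s7 hIi, mul_comm]
  calc I⁻¹ * s.star I ≤ s.star (I⁻¹ * I) := s.mul_star_le_star_mul_s7 hI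
    _ ≤ 1 := s.star_le_one_s7 (mul_ne_zero_of_ne_zero hIi hI) (mul_comm I _ ▸ mul_one_div_le_one)

theorem star_inv (hI : I ≠ 0) : s.star I⁻¹ = I⁻¹ :=
  le_antisymm ((s.star_le_inv_inv (inv_ne_zero_of_ne_zero_s7 hI)).trans_eq (inv_inv_inv hI))
    (s.le_star (inv_ne_zero_of_ne_zero_s7 hI))

theorem star_mul_inv_le_inv_div (hA : A ≠ 0) (hB : B ≠ 0) : s.star (A⁻¹ * B⁻¹) ≤ A⁻¹ / B := by
  have hAi := inv_ne_zero_of_ne_zero_s7 hA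
  have hI := mul_ne_zero_of_ne_zero hAi (inv_ne_zero_of_ne_zero_s7 hB)
  have hBI : B * (A⁻¹ * B⁻¹) ≤ A⁻¹ := by
    rw [mul_left_comm]
    exact (mul_le_mul_right mul_one_div_le_one _).trans_eq (mul_one _)
  rw [le_div_iff_mul_le hB, mul_comm]
  calc B * s.star (A⁻¹ * B⁻¹) ≤ s.star (B * (A⁻¹ * B⁻¹)) := s.mul_star_le_star_mul_s7 hI
    _ ≤ s.star A⁻¹ := s.star_mono (mul_ne_zero_of_ne_zero hB hI) hBI
    _ = A⁻¹ := s.star_inv hA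

theorem inv_div_le_star_mul_inv (hA : A ≠ 0) (hB : B ≠ 0) (hBv : s.star (B⁻¹⁻¹ * B⁻¹) = 1) :
    A⁻¹ / B ≤ s.star (A⁻¹ * B⁻¹) := by
  obtain hX | hX := eq_or_ne (A⁻¹ / B) 0
  · exact hX ▸ zero_le _
  have hBi := inv_ne_zero_of_ne_zero_s7 hB
  have hBvB := mul_ne_zero_of_ne_zero (inv_ne_zero_of_ne_zero_s7 hBi) hBi
  have hXBv : A⁻¹ / B * B⁻¹⁻¹ ≤ A⁻¹ :=
    mul_inv_inv_le_inv hA hB ((le_div_iff_mul_le hB).mp le_rfl)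
  calc A⁻¹ / B = A⁻¹ / B * s.star (B⁻¹⁻¹ * B⁻¹) := by rw [hBv, mul_one]
    _ ≤ s.star (A⁻¹ / B * (B⁻¹⁻¹ * B⁻¹)) := s.mul_star_le_star_mul_s7 hBvB
    _ ≤ s.star (A⁻¹ * B⁻¹) := s.star_mono (mul_ne_zero_of_ne_zero hX hBvB)
      (mul_assoc (A⁻¹ / B) _ _ ▸ mul_le_mul_left hXBv B⁻¹)

end StarOp

/-- `D` is a `(∗,v)`-CICD iff `(A^v : B) = (A^v B⁻¹)^∗` for all nonzero
fractional ideals `A`, `B`. -/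
theorem starVCICD_iff_v_colon (s : StarOp D K) :
    (∀ A : FractionalIdeal (nonZeroDivisors D) K, A ≠ 0 → s.star ((A⁻¹)⁻¹ * A⁻¹) = 1) ↔
    (∀ A B : FractionalIdeal (nonZeroDivisors D) K, A ≠ 0 → B ≠ 0 → (A⁻¹)⁻¹ / B = s.star ((A⁻¹)⁻¹ * B⁻¹)) := by
  constructor
  · intro hC A B hA hB
    have hAi := inv_ne_zero_of_ne_zero_s7 hA
    exact le_antisymm (s.inv_div_le_star_mul_inv hAi hB (hC B hB))
      (s.star_mul_inv_le_inv_div hAi hB)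
  · intro H A hA
    have hAi := inv_ne_zero_of_ne_zero_s7 hA
    have hAv := inv_ne_zero_of_ne_zero_s7 hAi
    have hcolon := H A A⁻¹⁻¹ hA hAv
    rw [inv_inv_inv hA] at hcolon
    refine le_antisymm (s.star_le_one_s7 (mul_ne_zero_of_ne_zero hAv hAi)
      (mul_comm A⁻¹ _ ▸ mul_one_div_le_one)) ?_
    rw [← hcolon]
    exact (le_div_iff_mul_le hAv).mpr (one_mul _).le
end
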